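/- Fix ρ₀ > 0, l > 0 and a positive integer n, and set L = n·l. For the one-dimensional charge density ρ(x) = ρ₀ sin(2π x / l), define for a ∈ [0, l] the total end charges q₊(a) = ∫_{L−l+a}^{L} ρ(x) dx + p(a) and q₋(a) = ∫_{−L}^{−L+a} ρ(x) dx − p(a), where p(a) = (1/l) ∫_a^{a+l} x ρ(x) dx. Then for every a ∈ [0, l], the dipole moment of the two end charges reproduces the exact total dipole moment of the bar: L·q₊(a) + (−L)·q₋(a) = ∫_{−L}^{L} x ρ(x) dx. -/

import Mathlib

/-!
Let `G x = ∫₀ˣ ρ` be the charge to the left of `x`. Zero mean over a period makes `G`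
`l`-periodic, and integration by parts gives `∫ᵤᵛ x ρ = v G(v) - u G(u) - ∫ᵤᵛ G`.
Hence `p(a) = G(a) - ⟨G⟩`, with `⟨G⟩` the mean of `G` over a period, the partial cells carry
the charges `-G(a)` and `G(a)`, and both sides of the identity equal `-2 L ⟨G⟩`.
-/

open Real intervalIntegral Function

noncomputable def cumulativeCharge (ρ : ℝ → ℝ) (x : ℝ) : ℝ := ∫ t in 0..x, ρ t

noncomputable def polarization (ρ : ℝ → ℝ) (l a : ℝ) : ℝ := (1 / l) * ∫ x in a..a + l, x * ρ x

section PeriodicDensity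

variable {ρ : ℝ → ℝ} {l : ℝ}

theorem hasDerivAt_cumulativeCharge (hρ : Continuous ρ) (x : ℝ) :
    HasDerivAt (cumulativeCharge ρ) (ρ x) x :=
  (hρ.integral_hasStrictDerivAt 0 x).hasDerivAt

theorem continuous_cumulativeCharge (hρ : Continuous ρ) : Continuous (cumulativeCharge ρ) :=
  continuous_iff_continuousAt.2 fun x => (hasDerivAt_cumulativeCharge hρ x).continuousAt

theorem integral_eq_cumulativeCharge_sub (hρ : Continuous ρ) (u v : ℝ) :
    ∫ x in u..v, ρ x = cumulativeCharge ρ v - cumulativeCharge ρ u :=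
  (integral_interval_sub_left (hρ.intervalIntegrable 0 v) (hρ.intervalIntegrable 0 u)).symm

theorem integral_id_mul_eq_cumulativeCharge (hρ : Continuous ρ) (u v : ℝ) :
    ∫ x in u..v, x * ρ x = v * cumulativeCharge ρ v - u * cumulativeCharge ρ u
      - ∫ x in u..v, cumulativeCharge ρ x := by
  simpa using integral_mul_deriv_eq_deriv_mul (fun x _ => hasDerivAt_id x)
    (fun x _ => hasDerivAt_cumulativeCharge hρ x) intervalIntegrable_const
    (hρ.intervalIntegrable u v)

theorem periodic_cumulativeCharge (hρ : Continuous ρ) (hper : Periodic ρ l)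
    (hmean : ∫ x in 0..l, ρ x = 0) : Periodic (cumulativeCharge ρ) l := fun x => by
  rw [← sub_eq_zero, ← integral_eq_cumulativeCharge_sub hρ, hper.intervalIntegral_add_eq x 0,
    zero_add, hmean]

theorem polarization_eq (hρ : Continuous ρ) (hper : Periodic ρ l)
    (hmean : ∫ x in 0..l, ρ x = 0) (hl : l ≠ 0) (a : ℝ) :
    polarization ρ l a = cumulativeCharge ρ a - (1 / l) * ∫ x in 0..l, cumulativeCharge ρ x := by
  have hG := periodic_cumulativeCharge hρ hper hmean
  rw [polarization, integral_id_mul_eq_cumulativeCharge hρ, hG a,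
    hG.intervalIntegral_add_eq a 0, zero_add]
  field_simp
  ring

theorem integral_id_mul_symm_int_mul_eq (hρ : Continuous ρ) (hper : Periodic ρ l)
    (hmean : ∫ x in 0..l, ρ x = 0) (n : ℤ) :
    ∫ x in -(n * l)..n * l, x * ρ x = -(2 * n) * ∫ x in 0..l, cumulativeCharge ρ x := by
  have hG := periodic_cumulativeCharge hρ hper hmean
  have hG0 : cumulativeCharge ρ 0 = 0 := integral_same
  have hGint : ∀ u v, IntervalIntegrable (cumulativeCharge ρ) MeasureTheory.volume u v :=
    (continuous_cumulativeCharge hρ).intervalIntegrable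
  have hsum := hG.intervalIntegral_add_zsmul_eq (2 * n) (-(n * l)) hGint
  have hend : -(n * l) + (2 * n : ℤ) • l = n * l := by rw [zsmul_eq_mul]; push_cast; ring
  rw [hend, hG.intervalIntegral_add_eq _ 0, zero_add, zsmul_eq_mul] at hsum
  rw [integral_id_mul_eq_cumulativeCharge hρ, hG.int_mul_eq, (hG.int_mul n).neg_eq, hG0, hsum]
  push_cast
  ring

theorem end_charges_dipole_eq_integral_id_mul (hρ : Continuous ρ) (hper : Periodic ρ l)
    (hmean : ∫ x in 0..l, ρ x = 0) (hl : l ≠ 0) {n : ℤ} {L : ℝ} (hL : L = n * l) (a : ℝ) :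
    L * ((∫ x in (L - l + a)..L, ρ x) + polarization ρ l a)
      + (-L) * ((∫ x in (-L)..(-L + a), ρ x) - polarization ρ l a)
      = ∫ x in (-L)..L, x * ρ x := by
  have hG := periodic_cumulativeCharge hρ hper hmean
  have hG0 : cumulativeCharge ρ 0 = 0 := integral_same
  subst hL
  have hright : cumulativeCharge ρ (n * l - l + a) = cumulativeCharge ρ a := by
    rw [← hG.int_mul (n - 1) a]; push_cast; ring_nf
  have hleft : cumulativeCharge ρ (-(n * l) + a) = cumulativeCharge ρ a := by
    rw [← hG.int_mul (-n) a]; push_cast; ring_nf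
  rw [integral_eq_cumulativeCharge_sub hρ, integral_eq_cumulativeCharge_sub hρ,
    polarization_eq hρ hper hmean hl, integral_id_mul_symm_int_mul_eq hρ hper hmean,
    hright, hleft, hG.int_mul_eq, (hG.int_mul n).neg_eq, hG0]
  field_simp
  ring

end PeriodicDensity

theorem periodic_sin_two_pi_mul_div {l : ℝ} (hl : l ≠ 0) :
    Periodic (fun x => sin (2 * π * x / l)) l := fun x => by
  dsimp only
  rw [show 2 * π * (x + l) / l = 2 * π * x / l + 2 * π by field_simp]
  exact sin_add_two_pi _

theorem integral_sin_two_pi_mul_div_period {l : ℝ} (hl : l ≠ 0) :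
    ∫ x in 0..l, sin (2 * π * x / l) = 0 := by
  simp_rw [mul_div_right_comm (2 * π) _ l]
  rw [integral_comp_mul_left (fun y => sin y) (by positivity), integral_sin, mul_zero,
    div_mul_cancel₀ _ hl, cos_zero, cos_two_pi, sub_self, smul_zero]

theorem end_charges_reproduce_total_dipole_moment_general
    (ρ₀ l : ℝ) (hl : 0 < l) (n : ℕ)
    (L : ℝ) (hL : L = n * l) :
    ∀ a ∈ Set.Icc (0 : ℝ) l,
      L * ((∫ x in (L - l + a)..L, ρ₀ * Real.sin (2 * Real.pi * x / l))
            + (1 / l) * (∫ x in a..(a + l), x * (ρ₀ * Real.sin (2 * Real.pi * x / l))))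
        + (-L) * ((∫ x in (-L)..(-L + a), ρ₀ * Real.sin (2 * Real.pi * x / l))
            - (1 / l) * (∫ x in a..(a + l), x * (ρ₀ * Real.sin (2 * Real.pi * x / l))))
        = ∫ x in (-L)..L, x * (ρ₀ * Real.sin (2 * Real.pi * x / l)) := by
  intro a _
  have hmean : ∫ x in 0..l, ρ₀ * sin (2 * π * x / l) = 0 := by
    rw [integral_const_mul, integral_sin_two_pi_mul_div_period hl.ne', mul_zero]
  exact end_charges_dipole_eq_integral_id_mul (by fun_prop)
    ((periodic_sin_two_pi_mul_div hl.ne').comp (ρ₀ * ·)) hmean hl.ne'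
    (n := n) (by rw [hL, Int.cast_natCast]) a

/-- The dipole moment of the two total end charges reproduces the exact total
dipole moment of the bar, for every choice `a` of unit cell. -/
theorem end_charges_reproduce_total_dipole_moment
    (ρ₀ l : ℝ) (hρ₀ : 0 < ρ₀) (hl : 0 < l) (n : ℕ) (hn : 0 < n)
    (L : ℝ) (hL : L = n * l) :
    ∀ a ∈ Set.Icc (0 : ℝ) l,
      L * ((∫ x in (L - l + a)..L, ρ₀ * Real.sin (2 * Real.pi * x / l))
            + (1 / l) * (∫ x in a..(a + l), x * (ρ₀ * Real.sin (2 * Real.pi * x / l))))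
        + (-L) * ((∫ x in (-L)..(-L + a), ρ₀ * Real.sin (2 * Real.pi * x / l))
            - (1 / l) * (∫ x in a..(a + l), x * (ρ₀ * Real.sin (2 * Real.pi * x / l))))
        = ∫ x in (-L)..L, x * (ρ₀ * Real.sin (2 * Real.pi * x / l)) :=
  end_charges_reproduce_total_dipole_moment_general ρ₀ l hl n L hL
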